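/- arXiv:2509.19324 — 4 statements merged into one kernel-verified Lean document; each statement's English description precedes it below -/
import Mathlib

section
/- For every prime k > 4, sin((k-1)!·π/k) = sin(π/k). -/
theorem sin_prime_eq (k : ℕ) (hk : 4 < k) (hp : k.Prime) :
    Real.sin (((Nat.factorial (k - 1)) : ℝ) * Real.pi / k) = Real.sin (Real.pi / k) := by
  haveI : Fact k.Prime := ⟨hp⟩
  have hk0 : (k : ℝ) ≠ 0 := by positivity
  -- Wilson: k ∣ (k-1)! + 1
  have hw : ((Nat.factorial (k - 1) : ℤ) : ZMod k) = -1 := by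
    push_cast
    exact ZMod.wilsons_lemma k
  have hdvd : (k : ℤ) ∣ (Nat.factorial (k - 1) : ℤ) + 1 := by
    have := (ZMod.intCast_zmod_eq_zero_iff_dvd ((Nat.factorial (k - 1) : ℤ) + 1) k).mp (by
      push_cast [hw]; ring)
    exact this
  obtain ⟨m, hm⟩ := hdvd
  -- m is odd
  have hfac_even : 2 ∣ Nat.factorial (k - 1) := by
    have h2 : 2 ≤ k - 1 := by omega
    exact Nat.dvd_factorial (by norm_num) h2
  have hkodd : Odd k := hp.odd_of_ne_two (by omega)
  have hm_odd : Odd m := by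
    obtain ⟨c, hc⟩ := hfac_even
    have h1 : Even ((Nat.factorial (k - 1) : ℤ)) := ⟨c, by push_cast [hc]; ring⟩
    have h2 : Odd ((k : ℤ) * m) := hm ▸ h1.add_one
    exact (Int.odd_mul.mp h2).2
  -- real computation
  have hreal : ((Nat.factorial (k - 1) : ℝ)) * Real.pi / k = m * Real.pi - Real.pi / k := by
    have h1 : (Nat.factorial (k - 1) : ℝ) = k * m - 1 := by
      have : ((Nat.factorial (k - 1) : ℤ) : ℝ) = ((k : ℤ) * m : ℤ) - 1 := by
        rw [← hm]; push_cast; ring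
      push_cast at this ⊢; linarith
    rw [h1]
    field_simp
  have hcos : Real.cos ((m : ℝ) * Real.pi) = -1 := by
    obtain ⟨j, hj⟩ := hm_odd
    have hx : (m : ℝ) * Real.pi = j * (2 * Real.pi) + Real.pi := by push_cast [hj]; ring
    rw [hx, Real.cos_int_mul_two_pi_add_pi]
  rw [hreal, Real.sin_sub, Real.sin_int_mul_pi, hcos]
  ring
end

section
/- For every prime k > 4, sin((k-1)!·π/k) / sin(π/k) = 1. -/
theorem sin_prime_ratio_one (k : ℕ) (hk : 4 < k) (hp : k.Prime) :
    Real.sin (((Nat.factorial (k - 1)) : ℝ) * Real.pi / k) / Real.sin (Real.pi / k) = 1 := by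
  haveI : Fact k.Prime := ⟨hp⟩
  have hdvd : k ∣ Nat.factorial (k - 1) + 1 := by
    have := ZMod.wilsons_lemma k
    have : ((Nat.factorial (k - 1) + 1 : ℕ) : ZMod k) = 0 := by push_cast [this]; ring
    exact (ZMod.natCast_eq_zero_iff _ _).mp this
  obtain ⟨m, hm⟩ := hdvd
  -- m is odd
  have hkodd : Odd k := hp.odd_of_ne_two (by omega)
  have hfac_even : Even (Nat.factorial (k - 1)) := by
    have : 2 ∣ Nat.factorial (k - 1) := Nat.dvd_factorial (by norm_num) (by omega)
    exact even_iff_two_dvd.mpr this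
  have hmodd : Odd m := by
    rcases Nat.even_or_odd m with he | ho
    · exfalso
      have : Even (k * m) := he.mul_left k
      rw [← hm] at this
      rcases hfac_even with ⟨a, ha⟩
      rcases this with ⟨b, hb⟩
      omega
    · exact ho
  obtain ⟨j, hj⟩ := hmodd
  have hk0 : (k : ℝ) ≠ 0 := by positivity
  have hfacR : (Nat.factorial (k - 1) : ℝ) = (2 * j + 1) * k - 1 := by
    have : Nat.factorial (k - 1) + 1 = k * (2 * j + 1) := by rw [hm, hj]
    have := congrArg (fun n : ℕ => (n : ℝ)) this
    push_cast at this
    linarith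
  have harg : (Nat.factorial (k - 1) : ℝ) * Real.pi / k = (Real.pi - Real.pi / k) + j * (2 * Real.pi) := by
    rw [hfacR]
    field_simp
    ring
  rw [harg, Real.sin_add_nat_mul_two_pi, Real.sin_pi_sub]
  have hpos : 0 < Real.sin (Real.pi / k) := by
    apply Real.sin_pos_of_pos_of_lt_pi
    · positivity
    · have hk1 : (1 : ℝ) < k := by exact_mod_cast (by omega : 1 < k)
      calc Real.pi / k < Real.pi / 1 := by
            apply div_lt_div_of_pos_left Real.pi_pos (by norm_num) hk1
        _ = Real.pi := by ring
  field_simp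
end

section
/- For every integer k > 4, sin((k-1)!·π/k)/sin(π/k) equals 1 if k is prime and 0 if k is composite. -/
lemma mul_dvd_fact (a b n : ℕ) (ha : 0 < a) (hab : a < b) (hbn : b ≤ n) :
    a * b ∣ n.factorial := by
  have h1 : a * b ∣ b.factorial := by
    have hb : 0 < b := lt_trans ha hab
    have : a ∣ (b - 1).factorial := Nat.dvd_factorial ha (by omega)
    calc a * b ∣ (b - 1).factorial * b := mul_dvd_mul_right this b
      _ = b.factorial := by
          rw [mul_comm]
          conv_rhs => rw [show b = (b - 1) + 1 by omega]
          rw [Nat.factorial_succ]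
          congr 1; omega
  exact h1.trans (Nat.factorial_dvd_factorial hbn)

lemma comp_dvd_fact (k : ℕ) (hk : 4 < k) (hnp : ¬ k.Prime) : k ∣ (k - 1).factorial := by
  obtain ⟨a, ha, h2a, hak⟩ := Nat.exists_dvd_of_not_prime2 (by omega) hnp
  obtain ⟨b, hb⟩ := ha
  have hb1 : 1 < b := by
    rcases Nat.lt_or_ge 1 b with h | h
    · exact h
    · interval_cases b <;> omega
  rcases lt_trichotomy a b with h | h | h
  · have : a * b ∣ (k - 1).factorial := mul_dvd_fact a b (k - 1) (by omega) h (by have : b < k := (by nlinarith); omega)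
    rwa [← hb] at this
  · -- k = a * a, a ≥ 3 since k > 4
    subst h
    have ha3 : 3 ≤ a := by nlinarith
    have hd : a * (2 * a) ∣ (k - 1).factorial :=
      mul_dvd_fact a (2 * a) (k - 1) (by omega) (by omega) (by have : 2 * a < k := (by nlinarith); omega)
    have : k ∣ a * (2 * a) := ⟨2, by rw [hb]; ring⟩
    exact this.trans hd
  · have : b * a ∣ (k - 1).factorial := mul_dvd_fact b a (k - 1) (by omega) h (by have : a < k := (by nlinarith); omega)
    rw [mul_comm b a, ← hb] at this; exact this

theorem barrett_term (k : ℕ) (hk : 4 < k) :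
    Real.sin (((Nat.factorial (k - 1)) : ℝ) * Real.pi / k) / Real.sin (Real.pi / k)
      = if k.Prime then 1 else 0 := by
  have hk0 : (k : ℝ) ≠ 0 := by positivity
  have hsin : Real.sin (Real.pi / k) ≠ 0 := by
    apply ne_of_gt
    apply Real.sin_pos_of_pos_of_lt_pi
    · positivity
    · rw [div_lt_iff₀ (by positivity)]
      have h1 : (1:ℝ) < k := by exact_mod_cast (by omega : 1 < k)
      nlinarith [Real.pi_pos]
  by_cases hp : k.Prime
  · rw [if_pos hp]
    haveI : Fact k.Prime := ⟨hp⟩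
    have hw : (((k - 1).factorial : ℕ) : ZMod k) = -1 := ZMod.wilsons_lemma k
    have hdvd : k ∣ (k - 1).factorial + 1 := by
      have : (((k - 1).factorial + 1 : ℕ) : ZMod k) = 0 := by push_cast [hw]; ring
      exact (ZMod.natCast_eq_zero_iff _ _).mp this
    obtain ⟨m, hm⟩ := hdvd
    have hmodd : Odd m := by
      have h2 : 2 ∣ (k - 1).factorial := Nat.dvd_factorial (by omega) (by omega)
      have hkodd : Odd k := hp.odd_of_ne_two (by omega)
      rcases Nat.even_or_odd m with he | ho
      · exfalso
        have : Even (k * m) := he.mul_left k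
        rw [← hm] at this
        obtain ⟨c, hc⟩ := h2
        obtain ⟨d, hd⟩ := this
        omega
      · exact ho
    obtain ⟨t, ht⟩ := hmodd
    have hfac : ((k - 1).factorial : ℝ) = (2 * t + 1) * k - 1 := by
      have : (k - 1).factorial + 1 = k * (2 * t + 1) := by rw [hm, ht]
      have := congrArg (fun x : ℕ => (x : ℝ)) this
      push_cast at this
      linarith
    rw [hfac]
    have harg : ((2 * (t : ℝ) + 1) * k - 1) * Real.pi / k
        = Real.pi - Real.pi / k + (t : ℝ) * (2 * Real.pi) := by
      field_simp
      ring
    rw [harg]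
    have := Real.sin_add_nat_mul_two_pi (Real.pi - Real.pi / k) t
    rw [this, Real.sin_pi_sub, div_self hsin]
  · rw [if_neg hp]
    obtain ⟨m, hm⟩ := comp_dvd_fact k hk hp
    have : ((k - 1).factorial : ℝ) * Real.pi / k = m * Real.pi := by
      rw [hm]; push_cast; field_simp
    rw [this, Real.sin_nat_mul_pi, zero_div]
end

section
/- For every natural number n ≥ 5, the number of primes p with p ≤ n-1, where 1 is counted as a prime (i.e., 1 plus the usual prime-counting function π(n-1)), equals 3 + Σ_{k=5}^{n-1} sin((k-1)!·π/k)/sin(π/k). -/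
/-!
By Wilson's theorem a prime `p` satisfies `(p - 1)! = m p - 1` with `m` odd (as `(p - 1)!` is even
for `p ≥ 3`), so `sin ((p - 1)! π / p) = sin (m π - π / p) = sin (π / p)` and the summand is `1`.
A composite `k > 4` divides `(k - 1)!`, so the summand is `sin (j π) = 0`. Hence the sum counts
the primes in `[5, n - 1]`, and the constant `3` accounts for `1`, `2` and `3`.
-/

open Finset
open scoped Nat

namespace Nat

theorem mul_dvd_factorial_of_ne {x y n : ℕ} (hxy : x ≠ y) (hx : 0 < x) (hy : 0 < y)
    (hxn : x ≤ n) (hyn : y ≤ n) : x * y ∣ n ! := by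
  wlog hlt : x < y generalizing x y
  · rw [mul_comm]
    exact this hxy.symm hy hx hyn hxn (by omega)
  have hx_dvd : x ∣ (y - 1)! := dvd_factorial hx (by omega)
  calc x * y ∣ (y - 1)! * y := mul_dvd_mul_right hx_dvd y
    _ = y ! := by rw [mul_comm, mul_factorial_pred hy.ne']
    _ ∣ n ! := factorial_dvd_factorial hyn

theorem dvd_factorial_pred_of_not_prime {k : ℕ} (hk : 4 < k) (hkp : ¬ k.Prime) :
    k ∣ (k - 1)! := by
  obtain ⟨a, ⟨b, rfl⟩, ha1, hak⟩ := exists_dvd_of_not_prime2 (by omega) hkp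
  have hb1 : 1 < b := by
    by_contra!
    interval_cases b <;> omega
  have hbk : b < a * b := lt_mul_left (by omega) ha1
  rcases eq_or_ne a b with rfl | hab
  · -- `a * a ∣ a * (2 * a)`, and `a ≠ 2 * a < a * a` once `a ≥ 3`
    have ha3 : 3 * a ≤ a * a := Nat.mul_le_mul_right a (by nlinarith)
    calc a * a ∣ a * (2 * a) := Dvd.intro 2 (by ring)
      _ ∣ (a * a - 1)! := mul_dvd_factorial_of_ne (by omega) (by omega) (by omega)
          (by omega) (by omega)
  · exact mul_dvd_factorial_of_ne hab (by omega) (by omega) (by omega) (by omega)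

theorem Prime.dvd_factorial_pred_add_one {p : ℕ} (hp : p.Prime) : p ∣ (p - 1)! + 1 := by
  have := Fact.mk hp
  rw [← ZMod.natCast_eq_zero_iff, cast_add, ZMod.wilsons_lemma, cast_one, neg_add_cancel]

theorem Prime.exists_odd_mul_eq_factorial_pred_add_one {p : ℕ} (hp : p.Prime) :
    ∃ m, Odd m ∧ p * m = (p - 1)! + 1 := by
  obtain ⟨m, hm⟩ := hp.dvd_factorial_pred_add_one
  refine ⟨m, ?_, hm.symm⟩
  rcases hp.eq_two_or_odd' with rfl | hp_odd
  · obtain rfl : m = 1 := by simpa using hm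
    exact odd_one
  have hp3 : 3 ≤ p := by
    have := hp.two_le
    rcases hp_odd with ⟨j, rfl⟩
    omega
  have hfac_even : Even (p - 1)! := even_iff_two_dvd.2 (Nat.dvd_factorial two_pos (by omega))
  have : Odd (p * m) := hm ▸ hfac_even.add_one
  exact (odd_mul.1 this).2

theorem count_eq_count_add_card_filter_Ico (p : ℕ → Prop) [DecidablePred p] {a b : ℕ}
    (hab : a ≤ b) : count p b = count p a + #{k ∈ Ico a b | p k} := by
  rw [count_eq_card_filter_range, count_eq_card_filter_range, range_eq_Ico, range_eq_Ico,
    ← Ico_union_Ico_eq_Ico a.zero_le hab, filter_union,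
    card_union_of_disjoint (disjoint_filter_filter (Ico_disjoint_Ico_consecutive 0 a b))]

end Nat

open Real

theorem sin_factorial_pred_mul_pi_div_of_prime {p : ℕ} (hp : p.Prime) :
    sin ((p - 1)! * π / p) = sin (π / p) := by
  obtain ⟨m, hm_odd, hm⟩ := hp.exists_odd_mul_eq_factorial_pred_add_one
  have hp0 : (p : ℝ) ≠ 0 := Nat.cast_ne_zero.2 hp.ne_zero
  have hfac : ((p - 1)! : ℝ) = p * m - 1 := by
    have hm' : (p : ℝ) * m = (p - 1)! + 1 := by exact_mod_cast hm
    linarith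
  have harg : ((p - 1)! : ℝ) * π / p = m * π - π / p := by
    rw [hfac]
    field_simp
  rw [harg, sin_nat_mul_pi_sub, hm_odd.neg_one_pow, neg_one_mul, neg_neg]

theorem sin_factorial_pred_mul_pi_div_of_not_prime {k : ℕ} (hk : 4 < k) (hkp : ¬ k.Prime) :
    sin ((k - 1)! * π / k) = 0 := by
  obtain ⟨j, hj⟩ := Nat.dvd_factorial_pred_of_not_prime hk hkp
  have hk0 : (k : ℝ) ≠ 0 := by positivity
  have harg : ((k - 1)! : ℝ) * π / k = j * π := by
    rw [hj]
    push_cast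
    field_simp
  rw [harg, sin_nat_mul_pi]

theorem sin_pi_div_natCast_pos {k : ℕ} (hk : 1 < k) : 0 < sin (π / k) := by
  have hk' : (1 : ℝ) < k := by exact_mod_cast hk
  apply sin_pos_of_pos_of_lt_pi (by positivity)
  rw [div_lt_iff₀ (by linarith)]
  nlinarith [pi_pos]

theorem sin_factorial_pred_mul_pi_div_div_sin_pi_div {k : ℕ} (hk : 4 < k) :
    sin ((k - 1)! * π / k) / sin (π / k) = if k.Prime then 1 else 0 := by
  split_ifs with hkp
  · rw [sin_factorial_pred_mul_pi_div_of_prime hkp]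
    exact div_self (sin_pi_div_natCast_pos hkp.one_lt).ne'
  · rw [sin_factorial_pred_mul_pi_div_of_not_prime hk hkp, zero_div]

theorem barrett_counts_primes_with_one (n : ℕ) (hn : 5 ≤ n) :
    ((1 + Nat.primeCounting (n - 1) : ℕ) : ℝ)
      = 3 + ∑ k ∈ Finset.Icc 5 (n - 1),
          Real.sin (((Nat.factorial (k - 1)) : ℝ) * Real.pi / k) / Real.sin (Real.pi / k) := by
  have hsum : ∑ k ∈ Icc 5 (n - 1), sin ((k - 1)! * π / k) / sin (π / k)
      = #{k ∈ Ico 5 n | k.Prime} := by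
    rw [sum_congr rfl fun k hk => sin_factorial_pred_mul_pi_div_div_sin_pi_div
      (by simp at hk; omega), sum_boole, Icc_sub_one_right_eq_Ico_of_not_isMin (by simp; omega)]
  have hcount : Nat.primeCounting (n - 1) = 2 + #{k ∈ Ico 5 n | k.Prime} := by
    rw [Nat.primeCounting_sub_one, Nat.primeCounting',
      Nat.count_eq_count_add_card_filter_Ico _ hn, show Nat.count Nat.Prime 5 = 2 by decide]
  rw [hsum, hcount]
  push_cast
  ring
end
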